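/- CDH extraction step (first case of the security analysis of the IHT-based DPDP scheme): let G be a commutative group, p a prime, and g ∈ G an element of order p. Let a, b, k ∈ ℤ and β_j, γ_j, Δμ_j ∈ ℤ for j = 1, …, s, and set h_j = g^{β_j} · (g^b)^{γ_j}. Suppose X = ∏_{j=1}^s h_j^{-a·Δμ_j} (the ratio c̃/c of the forged and honest aggregated tags) and suppose k · (∑_{j=1}^s γ_j·Δμ_j) ≡ -1 (mod p). Then (X · (g^a)^{∑_{j=1}^s β_j·Δμ_j})^k = g^{a·b}, i.e., the CDH value g^{ab} is computed from X and public exponents. -/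

import Mathlib

/-!
Every `h j` is the power `g ^ (β j + b * γ j)`, so with `S = ∑ γ j * Δμ j` and
`T = ∑ β j * Δμ j` one has `X = g ^ (-(a * T) - a * b * S)` and hence
`X * (g ^ a) ^ T = (g ^ (a * b)) ^ (-S)`. Since `k` inverts `-S` modulo `p = orderOf g`,
raising to the `k`-th power recovers `g ^ (a * b)`.
-/

section

variable {G : Type*} [CommGroup G]

theorem Finset.prod_zpow_eq_zpow_sum {ι : Type*} (s : Finset ι) (f : ι → ℤ) (g : G) :
    ∏ i ∈ s, g ^ f i = g ^ ∑ i ∈ s, f i :=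
  Finset.cons_induction (by simp)
    (fun _ _ _ ih ↦ by rw [Finset.prod_cons, Finset.sum_cons, zpow_add, ih]) s

theorem Finset.prod_zpow_zpow_eq_zpow_sum {ι : Type*} (s : Finset ι) (u e : ι → ℤ) (g : G) :
    ∏ i ∈ s, (g ^ u i) ^ e i = g ^ ∑ i ∈ s, u i * e i := by
  simp only [← zpow_mul, Finset.prod_zpow_eq_zpow_sum]

theorem zpow_neg_mul_zpow_of_mul_modEq_neg_one {g : G} {S k : ℤ}
    (hk : k * S ≡ -1 [ZMOD orderOf g]) (x : ℤ) : (g ^ (-(x * S))) ^ k = g ^ x := by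
  rw [← zpow_mul, zpow_eq_zpow_iff_modEq]
  have := hk.mul_left (-x)
  convert this using 1 <;> ring

end

theorem iht_cdh_extraction_general
    {G : Type*} [CommGroup G] (p : ℕ)
    (g : G) (hg : orderOf g = p)
    (s : ℕ) (a b k : ℤ) (β γ Δμ : Fin s → ℤ)
    (h : Fin s → G) (hh : ∀ j, h j = g ^ (β j) * (g ^ b) ^ (γ j))
    (X : G) (hX : X = ∏ j, (h j) ^ (-(a * Δμ j)))
    (hk : k * (∑ j, γ j * Δμ j) ≡ -1 [ZMOD p]) :
    (X * (g ^ a) ^ (∑ j, β j * Δμ j)) ^ k = g ^ (a * b) := by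
  set S := ∑ j, γ j * Δμ j
  set T := ∑ j, β j * Δμ j
  have hh_pow : ∀ j, h j = g ^ (β j + b * γ j) := fun j ↦ by
    rw [hh, zpow_add, zpow_mul]
  have hX_pow : X = g ^ (-(a * T) - a * b * S) := by
    rw [hX, funext hh_pow, Finset.prod_zpow_zpow_eq_zpow_sum]
    congr 1
    simp only [S, T, Finset.mul_sum, ← Finset.sum_neg_distrib, ← Finset.sum_sub_distrib]
    exact Finset.sum_congr rfl fun _ _ ↦ by ring
  have hratio : X * (g ^ a) ^ T = g ^ (-(a * b * S)) := by
    rw [hX_pow, ← zpow_mul, ← zpow_add]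
    ring_nf
  rw [hratio]
  exact zpow_neg_mul_zpow_of_mul_modEq_neg_one (hg ▸ hk) (a * b)

/-- CDH extraction step (first case of the security analysis of the IHT-based
DPDP scheme): the CDH value `g^(a*b)` is computed from the tag ratio `X` and
public exponents. -/
theorem iht_cdh_extraction
    {G : Type*} [CommGroup G] (p : ℕ) (hp : p.Prime)
    (g : G) (hg : orderOf g = p)
    (s : ℕ) (a b k : ℤ) (β γ Δμ : Fin s → ℤ)
    (h : Fin s → G) (hh : ∀ j, h j = g ^ (β j) * (g ^ b) ^ (γ j))
    (X : G) (hX : X = ∏ j, (h j) ^ (-(a * Δμ j)))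
    (hk : k * (∑ j, γ j * Δμ j) ≡ -1 [ZMOD p]) :
    (X * (g ^ a) ^ (∑ j, β j * Δμ j)) ^ k = g ^ (a * b) :=
  iht_cdh_extraction_general p g hg s a b k β γ Δμ h hh X hX hk
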